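/- Let a > 0, h > 0, let X_1,…,X_n ∈ ℝ^d be distinct points and Y_1,…,Y_n ∈ ℝ. For the singular kernel K(u) = ‖u‖^{-a} 1{‖u‖ ≤ 1} with K_h(x) = K(x/h), the Nadaraya–Watson ratio g(x) = Σ_{j=1}^n Y_j K_h(x−X_j) / Σ_{j=1}^n K_h(x−X_j) (defined wherever the denominator is positive) satisfies lim_{x → X_i, x ≠ X_i} g(x) = Y_i for every i; i.e., the estimator interpolates the data points. -/
import Mathlib


open MeasureTheory Real Filter Finset Topology
open scoped ENNReal NNReal

/-- The singular kernel `K(u) = ‖u‖^{-a} 1{‖u‖ ≤ 1}`. -/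
noncomputable def singKernel (d : ℕ) (a : ℝ) (u : EuclideanSpace ℝ (Fin d)) : ℝ :=
  if ‖u‖ ≤ 1 then ‖u‖ ^ (-a) else 0

lemma singKernel_nonneg (d : ℕ) (a : ℝ) (u : EuclideanSpace ℝ (Fin d)) :
    0 ≤ singKernel d a u := by
  unfold singKernel
  split
  · exact Real.rpow_nonneg (norm_nonneg u) _
  · exact le_rfl

lemma div_div_div_cancel_aux (A B c : ℝ) (hc : c ≠ 0) : (A / c) / (B / c) = A / B := by
  rcases eq_or_ne B 0 with hB | hB
  · simp [hB]
  · field_simp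

/-- Interpolation: for distinct data points `X₁, …, X_n` and the singular kernel
`K(u) = ‖u‖^{-a} 1{‖u‖ ≤ 1}`, the Nadaraya–Watson ratio
`g(x) = Σⱼ Yⱼ K_h(x - Xⱼ) / Σⱼ K_h(x - Xⱼ)` tends to `Yᵢ` as `x → Xᵢ`, `x ≠ Xᵢ`. -/
theorem nw_ratio_interpolates
    {d : ℕ} (hd : 1 ≤ d) (n : ℕ)
    (X : Fin n → EuclideanSpace ℝ (Fin d)) (Y : Fin n → ℝ)
    (hdist : Function.Injective X)
    (a : ℝ) (ha : 0 < a) (h : ℝ) (hh : 0 < h) (i : Fin n) :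
    Tendsto
      (fun x : EuclideanSpace ℝ (Fin d) =>
        (∑ j, Y j * singKernel d a (h⁻¹ • (x - X j))) /
        (∑ j, singKernel d a (h⁻¹ • (x - X j))))
      (𝓝[≠] (X i)) (𝓝 (Y i)) := by
  set l := 𝓝[≠] (X i) with hl
  set F : Fin n → EuclideanSpace ℝ (Fin d) → ℝ :=
    fun j x => singKernel d a (h⁻¹ • (x - X j)) with hF
  have hnorm : ∀ (j : Fin n) (x : EuclideanSpace ℝ (Fin d)),
      ‖h⁻¹ • (x - X j)‖ = h⁻¹ * ‖x - X j‖ := by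
    intro j x
    rw [norm_smul, Real.norm_eq_abs, abs_inv, abs_of_pos hh]
  -- eventually close to X i
  have hball : ∀ᶠ x in l, ‖x - X i‖ < h := by
    apply mem_nhdsWithin_of_mem_nhds
    have : Metric.ball (X i) h ∈ 𝓝 (X i) := Metric.ball_mem_nhds _ hh
    filter_upwards [this] with x hx
    simpa [Metric.mem_ball, dist_eq_norm] using hx
  have hne : ∀ᶠ x in l, x ≠ X i := self_mem_nhdsWithin
  -- A : F i tends to atTop
  have h1 : Tendsto (fun x : EuclideanSpace ℝ (Fin d) => h⁻¹ * ‖x - X i‖) l (𝓝[>] 0) := by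
    apply tendsto_nhdsWithin_of_tendsto_nhds_of_eventually_within
    · have hcont : Tendsto (fun x : EuclideanSpace ℝ (Fin d) => h⁻¹ * ‖x - X i‖)
          (𝓝 (X i)) (𝓝 (h⁻¹ * ‖(X i : EuclideanSpace ℝ (Fin d)) - X i‖)) := by
        exact (tendsto_const_nhds.mul ((continuous_norm.comp
          (continuous_id.sub continuous_const)).tendsto _))
      simp only [sub_self, norm_zero, mul_zero] at hcont
      exact hcont.mono_left nhdsWithin_le_nhds
    · filter_upwards [hne] with x hx
      have : (0:ℝ) < ‖x - X i‖ := by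
        rw [norm_pos_iff, sub_ne_zero]; exact hx
      exact mul_pos (inv_pos.mpr hh) this
  have h2 : Tendsto (fun t : ℝ => t ^ a) (𝓝[>] 0) (𝓝[>] 0) := by
    apply tendsto_nhdsWithin_of_tendsto_nhds_of_eventually_within
    · have := (Real.continuousAt_rpow_const 0 a (Or.inr ha.le)).tendsto
      rw [Real.zero_rpow ha.ne'] at this
      exact this.mono_left nhdsWithin_le_nhds
    · filter_upwards [self_mem_nhdsWithin] with t ht
      exact Real.rpow_pos_of_pos ht a
  have hA : Tendsto (F i) l atTop := by
    have h3 : Tendsto (fun x : EuclideanSpace ℝ (Fin d) =>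
        ((h⁻¹ * ‖x - X i‖) ^ a)⁻¹) l atTop :=
      (tendsto_inv_nhdsGT_zero.comp (h2.comp h1))
    apply h3.congr'
    filter_upwards [hball, hne] with x hx1 hx2
    have hpos : (0:ℝ) < ‖x - X i‖ := by
      rw [norm_pos_iff, sub_ne_zero]; exact hx2
    have hle' : h⁻¹ * ‖x - X i‖ ≤ 1 := by
      rw [inv_mul_le_iff₀ hh, mul_one]
      exact hx1.le
    simp only [hF, singKernel, hnorm]
    rw [if_pos hle', Real.rpow_neg (by positivity)]
  have hApos : ∀ᶠ x in l, 0 < F i x := hA.eventually_gt_atTop 0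
  -- B : for j ≠ i, F j / F i → 0
  have hB : ∀ j : Fin n, j ≠ i → Tendsto (fun x => F j x / F i x) l (𝓝 0) := by
    intro j hj
    set c := ‖X i - X j‖ with hc
    have hcpos : 0 < c := by
      rw [hc, norm_pos_iff, sub_ne_zero]
      exact fun e => hj (hdist e).symm
    set C := (h⁻¹ * (c / 2)) ^ (-a) with hC
    have hCpos : 0 < C := Real.rpow_pos_of_pos (by positivity) _
    have hbound : ∀ᶠ x in l, F j x ≤ C := by
      have hnear : ∀ᶠ x in l, ‖x - X i‖ < c / 2 := by
        apply mem_nhdsWithin_of_mem_nhds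
        have : Metric.ball (X i) (c / 2) ∈ 𝓝 (X i) := Metric.ball_mem_nhds _ (by positivity)
        filter_upwards [this] with x hx
        simpa [Metric.mem_ball, dist_eq_norm] using hx
      filter_upwards [hnear] with x hx
      have hfar : c / 2 ≤ ‖x - X j‖ := by
        have htri : c ≤ ‖X i - x‖ + ‖x - X j‖ := by
          have := norm_sub_le_norm_sub_add_norm_sub (X i) x (X j)
          simpa [hc] using this
        have h1 : ‖X i - x‖ < c / 2 := by rwa [norm_sub_rev]
        linarith
      have hfar' : h⁻¹ * (c / 2) ≤ ‖h⁻¹ • (x - X j)‖ := by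
        rw [hnorm]
        exact mul_le_mul_of_nonneg_left hfar (by positivity)
      simp only [hF, singKernel]
      split
      · exact Real.rpow_le_rpow_of_nonpos (by positivity) hfar' (neg_nonpos.mpr ha.le)
      · exact hCpos.le
    apply squeeze_zero' 
    · filter_upwards [hApos] with x hx
      exact div_nonneg (singKernel_nonneg _ _ _) hx.le
    · show ∀ᶠ x in l, F j x / F i x ≤ C / F i x
      filter_upwards [hApos, hbound] with x hx1 hx2
      gcongr
    · exact tendsto_const_nhds.div_atTop hA
  -- limits of the transformed numerator and denominator
  have hS1 : Tendsto (fun x => ∑ j ∈ Finset.univ.erase i, Y j * (F j x / F i x)) l (𝓝 0) := by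
    have := tendsto_finset_sum (Finset.univ.erase i)
      (fun j hj => ((hB j (Finset.ne_of_mem_erase hj)).const_mul (Y j)))
    simpa using this
  have hS2 : Tendsto (fun x => ∑ j ∈ Finset.univ.erase i, (F j x / F i x)) l (𝓝 0) := by
    have := tendsto_finset_sum (Finset.univ.erase i)
      (fun j hj => (hB j (Finset.ne_of_mem_erase hj)))
    simpa using this
  have hT1 : Tendsto (fun x => Y i + ∑ j ∈ Finset.univ.erase i, Y j * (F j x / F i x))
      l (𝓝 (Y i)) := by
    simpa using tendsto_const_nhds.add hS1
  have hT2 : Tendsto (fun x => 1 + ∑ j ∈ Finset.univ.erase i, (F j x / F i x)) l (𝓝 1) := by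
    simpa using tendsto_const_nhds.add hS2
  have hT := hT1.div hT2 one_ne_zero
  rw [div_one] at hT
  apply hT.congr'
  filter_upwards [hApos] with x hx
  have hcne : F i x ≠ 0 := hx.ne'
  have e1 : Y i + ∑ j ∈ Finset.univ.erase i, Y j * (F j x / F i x)
      = (∑ j, Y j * F j x) / F i x := by
    rw [← Finset.add_sum_erase Finset.univ (fun j => Y j * F j x) (Finset.mem_univ i),
      add_div, Finset.sum_div, mul_div_assoc, div_self hcne, mul_one]
    congr 1
    exact Finset.sum_congr rfl fun j _ => (mul_div_assoc _ _ _).symm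
  have e2 : 1 + ∑ j ∈ Finset.univ.erase i, (F j x / F i x)
      = (∑ j, F j x) / F i x := by
    rw [← Finset.add_sum_erase Finset.univ (fun j => F j x) (Finset.mem_univ i),
      add_div, div_self hcne, Finset.sum_div]
  simp only [Pi.div_apply]
  rw [e1, e2, div_div_div_cancel_aux _ _ _ hcne]
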